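/- Let a > 0, b ∈ (0,1) and 0 ≤ σ₁ < σ₂ ≤ 1. Let x̄₁ be the unique fixed point of f_{a,b,σ₁} in (0,1) and x̄₂ the unique fixed point of f_{a,b,σ₂} in (0,1). Then the derivatives at the respective fixed points satisfy f_{a,b,σ₁}′(x̄₁) > f_{a,b,σ₂}′(x̄₂); equivalently, 1 − σ₁ − a·x̄₁·(1−x̄₁) > 1 − σ₂ − a·x̄₂·(1−x̄₂). -/

import Mathlib

open Real Filter Set

/-- The EWA dynamics map `f_{a,b,σ}`. -/
noncomputable def f (a b σ x : ℝ) : ℝ :=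
  x ^ (1 - σ) / (x ^ (1 - σ) + (1 - x) ^ (1 - σ) * Real.exp (a * (x - b)))

lemma fixed_eq (a b σ x : ℝ) (hx : 0 < x) (hx1 : x < 1) (hfix : f a b σ x = x) :
    σ * (Real.log x - Real.log (1 - x)) + a * (x - b) = 0 := by
  have h1x : (0:ℝ) < 1 - x := by linarith
  have hA : (0:ℝ) < x ^ (1 - σ) := Real.rpow_pos_of_pos hx _
  have hB : (0:ℝ) < (1 - x) ^ (1 - σ) * Real.exp (a * (x - b)) :=
    mul_pos (Real.rpow_pos_of_pos h1x _) (Real.exp_pos _)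
  have hDen : (0:ℝ) < x ^ (1 - σ) + (1 - x) ^ (1 - σ) * Real.exp (a * (x - b)) := by linarith
  rw [f, div_eq_iff hDen.ne'] at hfix
  -- (1-x) * x^(1-σ) = x * ((1-x)^(1-σ) * exp(a(x-b)))
  have key : (1 - x) * x ^ (1 - σ) = x * ((1 - x) ^ (1 - σ) * Real.exp (a * (x - b))) := by
    nlinarith [hfix]
  have hlog := congrArg Real.log key
  rw [Real.log_mul h1x.ne' hA.ne', Real.log_mul hx.ne' hB.ne',
      Real.log_mul (Real.rpow_pos_of_pos h1x (1-σ)).ne' (Real.exp_pos _).ne',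
      Real.log_rpow hx, Real.log_rpow h1x, Real.log_exp] at hlog
  linarith [hlog]

lemma deriv_f (a b σ x : ℝ) (hx : 0 < x) (hx1 : x < 1) (hfix : f a b σ x = x) :
    deriv (f a b σ) x = 1 - σ - a * x * (1 - x) := by
  have h1x : (0:ℝ) < 1 - x := by linarith
  set p := 1 - σ with hp
  set E := Real.exp (a * (x - b)) with hE
  have hEpos : 0 < E := Real.exp_pos _
  have hA : (0:ℝ) < x ^ p := Real.rpow_pos_of_pos hx _
  have hB : (0:ℝ) < (1 - x) ^ p * E := mul_pos (Real.rpow_pos_of_pos h1x _) hEpos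
  have hDen : (0:ℝ) < x ^ p + (1 - x) ^ p * E := by linarith
  -- derivatives of the pieces
  have hN : HasDerivAt (fun y : ℝ => y ^ p) (p * x ^ (p - 1)) x :=
    Real.hasDerivAt_rpow_const (Or.inl hx.ne')
  have hone : HasDerivAt (fun y : ℝ => 1 - y) (-1) x := by
    exact (hasDerivAt_id' x).const_sub (1:ℝ)
  have hV : HasDerivAt (fun y : ℝ => (1 - y) ^ p) ((-1) * p * (1 - x) ^ (p - 1)) x :=
    hone.rpow_const (Or.inl h1x.ne')
  have hEE : HasDerivAt (fun y : ℝ => Real.exp (a * (y - b))) (E * (a * 1)) x :=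
    (((hasDerivAt_id x).sub_const b).const_mul a).exp
  have hM : HasDerivAt (fun y : ℝ => y ^ p + (1 - y) ^ p * Real.exp (a * (y - b)))
      (p * x ^ (p - 1) + ((-1) * p * (1 - x) ^ (p - 1) * E + (1 - x) ^ p * (E * (a * 1)))) x :=
    hN.add (hV.mul hEE)
  have hdiv : HasDerivAt (f a b σ)
      ((p * x ^ (p - 1) * (x ^ p + (1 - x) ^ p * E)
        - x ^ p * (p * x ^ (p - 1) + ((-1) * p * (1 - x) ^ (p - 1) * E + (1 - x) ^ p * (E * (a * 1)))))
        / (x ^ p + (1 - x) ^ p * E) ^ 2) x := by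
    have := hN.div hM hDen.ne'
    exact this
  rw [hdiv.deriv]
  -- simplify using the fixed point identity
  have hfix' : x ^ p = x * (x ^ p + (1 - x) ^ p * E) := by
    rw [f] at hfix
    rw [div_eq_iff hDen.ne'] at hfix
    linarith [hfix]
  have hxp1 : x ^ (p - 1) = x ^ p / x := by
    rw [Real.rpow_sub hx, Real.rpow_one]
  have h1xp1 : (1 - x) ^ (p - 1) = (1 - x) ^ p / (1 - x) := by
    rw [Real.rpow_sub h1x, Real.rpow_one]
  rw [hxp1, h1xp1]
  have h1p : (0:ℝ) < (1 - x) ^ p := Real.rpow_pos_of_pos h1x _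
  have hEeq : E = ((1 - x) * x ^ p) / (x * (1 - x) ^ p) := by
    rw [eq_div_iff (by positivity)]
    nlinarith [hfix']
  rw [hEeq]
  field_simp
  ring

lemma prod_ge (a b σ₁ σ₂ x₁ x₂ : ℝ) (ha : 0 < a) (h1 : 0 ≤ σ₁) (h12 : σ₁ < σ₂)
    (hx1 : 0 < x₁) (hx1' : x₁ < 1) (hx2 : 0 < x₂) (hx2' : x₂ < 1)
    (e1 : σ₁ * (Real.log x₁ - Real.log (1 - x₁)) + a * (x₁ - b) = 0)
    (e2 : σ₂ * (Real.log x₂ - Real.log (1 - x₂)) + a * (x₂ - b) = 0) :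
    x₁ * (1 - x₁) ≤ x₂ * (1 - x₂) := by
  have h2pos : 0 < σ₂ := lt_of_le_of_lt h1 h12
  set L₁ := Real.log x₁ - Real.log (1 - x₁) with hL1
  set L₂ := Real.log x₂ - Real.log (1 - x₂) with hL2
  -- L is strictly monotone: helper
  have Lmono : ∀ u v : ℝ, 0 < u → v < 1 → u < v →
      Real.log u - Real.log (1 - u) < Real.log v - Real.log (1 - v) := by
    intro u v hu hv huv
    have h1 : Real.log u < Real.log v := Real.log_lt_log hu huv
    have h2 : Real.log (1 - v) < Real.log (1 - u) := Real.log_lt_log (by linarith) (by linarith)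
    linarith
  have hLsign : ∀ u : ℝ, 0 < u → u < 1 →
      ((1/2 < u → 0 < Real.log u - Real.log (1 - u)) ∧
       (u < 1/2 → Real.log u - Real.log (1 - u) < 0) ∧
       (u = 1/2 → Real.log u - Real.log (1 - u) = 0)) := by
    intro u hu hu1
    refine ⟨fun h => ?_, fun h => ?_, fun h => ?_⟩
    · have := Real.log_lt_log (by linarith : (0:ℝ) < 1 - u) (by linarith : 1 - u < u)
      linarith
    · have := Real.log_lt_log hu (by linarith : u < 1 - u)
      linarith
    · subst h; norm_num
  rcases lt_trichotomy x₁ (1/2) with hc | hc | hc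
  · -- x₁ < 1/2 : L₁ < 0, so a(x₁ - b) ≥ 0, i.e. b ≤ x₁
    have hL1neg : L₁ < 0 := ((hLsign x₁ hx1 hx1').2.1) hc
    have hbx : b ≤ x₁ := by nlinarith
    -- claim: x₂ < 1/2
    have hx2half : x₂ < 1/2 := by
      by_contra h
      push_neg at h
      have hL2nn : 0 ≤ L₂ := by
        rcases eq_or_lt_of_le h with h' | h'
        · have := ((hLsign x₂ hx2 hx2').2.2) h'.symm; linarith
        · have := ((hLsign x₂ hx2 hx2').1) h'; linarith
      nlinarith
    -- claim: x₁ < x₂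
    have hlt : x₁ < x₂ := by
      by_contra h
      push_neg at h
      rcases eq_or_lt_of_le h with h' | h'
      · -- x₂ = x₁
        subst h'
        rw [hL2, ← hL1] at e2
        have heq : σ₁ * L₁ = σ₂ * L₁ := by linarith
        nlinarith [mul_pos (sub_pos.mpr h12) (neg_pos.mpr hL1neg)]
      · -- x₂ < x₁
        have hLlt : L₂ < L₁ := Lmono x₂ x₁ hx2 hx1' h'
        have hL2neg : L₂ < 0 := by linarith
        have hs1 : σ₂ * L₂ < σ₁ * L₂ := by
          nlinarith [mul_lt_mul_of_pos_right h12 (neg_pos.mpr hL2neg)]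
        have hs2 : σ₁ * L₂ ≤ σ₁ * L₁ := mul_le_mul_of_nonneg_left hLlt.le h1
        linarith [mul_lt_mul_of_pos_left h' ha]
    nlinarith [mul_nonneg (by linarith : (0:ℝ) ≤ x₂ - x₁) (by linarith : (0:ℝ) ≤ 1 - x₁ - x₂)]
  · -- x₁ = 1/2 : then b = 1/2 and x₂ = 1/2
    have hL1z : L₁ = 0 := ((hLsign x₁ hx1 hx1').2.2) hc
    have hb : b = x₁ := by
      have : a * (x₁ - b) = 0 := by linarith [e1, mul_eq_zero_of_right σ₁ hL1z]
      rcases mul_eq_zero.mp this with h | h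
      · linarith
      · linarith
    have hx2e : x₂ = 1/2 := by
      rcases lt_trichotomy x₂ (1/2) with h | h | h
      · have hL2neg : L₂ < 0 := ((hLsign x₂ hx2 hx2').2.1) h
        nlinarith
      · exact h
      · have hL2pos : 0 < L₂ := ((hLsign x₂ hx2 hx2').1) h
        nlinarith
    rw [hx2e, hc]
  · -- x₁ > 1/2 : symmetric
    have hL1pos : 0 < L₁ := ((hLsign x₁ hx1 hx1').1) hc
    have hbx : x₁ ≤ b := by nlinarith
    have hx2half : 1/2 < x₂ := by
      by_contra h
      push_neg at h
      have hL2np : L₂ ≤ 0 := by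
        rcases eq_or_lt_of_le h with h' | h'
        · have := ((hLsign x₂ hx2 hx2').2.2) h'; linarith
        · have := ((hLsign x₂ hx2 hx2').2.1) h'; linarith
      nlinarith
    have hlt : x₂ < x₁ := by
      by_contra h
      push_neg at h
      rcases eq_or_lt_of_le h with h' | h'
      · subst h'
        rw [hL2, ← hL1] at e2
        have heq : σ₁ * L₁ = σ₂ * L₁ := by linarith
        nlinarith [mul_pos (sub_pos.mpr h12) hL1pos]
      · have hLlt : L₁ < L₂ := Lmono x₁ x₂ hx1 hx2' h'
        have hL2pos : 0 < L₂ := by linarith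
        have hs1 : σ₁ * L₁ < σ₂ * L₁ := mul_lt_mul_of_pos_right h12 hL1pos
        have hs2 : σ₂ * L₁ ≤ σ₂ * L₂ := mul_le_mul_of_nonneg_left hLlt.le h2pos.le
        linarith [mul_lt_mul_of_pos_left h' ha]
    nlinarith [mul_nonneg (by linarith : (0:ℝ) ≤ x₁ - x₂) (by linarith : (0:ℝ) ≤ x₁ + x₂ - 1)]

/-- The derivative of `f_{a,b,σ}` at the fixed point decreases with the discount
factor `σ`. -/
theorem deriv_at_fixed_point_decreasing_in_sigma (a b σ₁ σ₂ : ℝ) (ha : 0 < a)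
    (hb : b ∈ Set.Ioo (0:ℝ) 1) (h1 : 0 ≤ σ₁) (h12 : σ₁ < σ₂) (h2 : σ₂ ≤ 1)
    (xbar₁ xbar₂ : ℝ)
    (hx1 : xbar₁ ∈ Set.Ioo (0:ℝ) 1) (hfix1 : f a b σ₁ xbar₁ = xbar₁)
    (hx2 : xbar₂ ∈ Set.Ioo (0:ℝ) 1) (hfix2 : f a b σ₂ xbar₂ = xbar₂) :
    deriv (f a b σ₂) xbar₂ < deriv (f a b σ₁) xbar₁ ∧
    1 - σ₂ - a * xbar₂ * (1 - xbar₂) < 1 - σ₁ - a * xbar₁ * (1 - xbar₁) := by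
  obtain ⟨hx1a, hx1b⟩ := hx1
  obtain ⟨hx2a, hx2b⟩ := hx2
  have e1 := fixed_eq a b σ₁ xbar₁ hx1a hx1b hfix1
  have e2 := fixed_eq a b σ₂ xbar₂ hx2a hx2b hfix2
  have hprod := prod_ge a b σ₁ σ₂ xbar₁ xbar₂ ha h1 h12 hx1a hx1b hx2a hx2b e1 e2
  have key : 1 - σ₂ - a * xbar₂ * (1 - xbar₂) < 1 - σ₁ - a * xbar₁ * (1 - xbar₁) := by
    nlinarith [mul_le_mul_of_nonneg_left hprod ha.le]
  refine ⟨?_, key⟩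
  rw [deriv_f a b σ₁ xbar₁ hx1a hx1b hfix1, deriv_f a b σ₂ xbar₂ hx2a hx2b hfix2]
  exact key
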